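/- For integers n ≥ r ≥ 1, the q-analog [p_n^{(r)}]_q equals the determinant of the (n−r+1)×(n−r+1) lower-Hessenberg matrix M whose entries are: M_{i,1} = [r+i−1 choose r]_q · e_{r+i−1} for 1 ≤ i ≤ n−r+1; M_{i,i+1} = 1 for 1 ≤ i ≤ n−r; M_{i,j} = e_{i−j+1} for 2 ≤ j ≤ i ≤ n−r+1; and M_{i,j} = 0 for j > i+1. -/

import Mathlib

/-!
Write `S(t) = ∑_m (-1)^m [p_{m+r}^{(r)}]_q t^m`. Since
`D_q (∑ a_m t^m) = ∑ [m+1]_q a_{m+1} t^m`, we get `D_q^r E(t) = [r]_q! ∑_m c_m t^m` with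
`c_m = [r+m choose r]_q e_{r+m}`, so the defining identity says `E(t) S(t) = ∑_m c_m t^m`.
Truncated at degree `k` this is the unitriangular Toeplitz system `L u = c`, `L_{ij} = e_{i-j}`,
so by Cramer's rule `u_k` is the determinant of `L` with its last column replaced by `c`.
Moving that column to the front gives the Hessenberg matrix of the statement (the superdiagonal
`1`s are the diagonal `e_0` of `L`) and the sign `(-1)^k`.
-/

open MvPolynomial PowerSeries

noncomputable section

/-- The field `ℚ(q)` of rational functions in the indeterminate `q`. -/
abbrev K : Type := RatFunc ℚ

/-- The indeterminate `q` in `ℚ(q)`. -/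
def qq : K := RatFunc.X

/-- `[n]_x = 1 + x + ⋯ + x^{n-1}` (so `[0]_x = 0`). -/
def qNat (x : K) (n : ℕ) : K := ∑ i ∈ Finset.range n, x ^ i

/-- `[n]_x! = [1]_x [2]_x ⋯ [n]_x` (so `[0]_x! = 1`). -/
def qFact (x : K) (n : ℕ) : K := ∏ i ∈ Finset.range n, qNat x (i + 1)

/-- The `q`-binomial coefficient `[n choose k]_x`, equal to
`[n]_x!/([k]_x! [n-k]_x!)` for `n ≥ k ≥ 0` and to `0` otherwise. -/
def qBinom (x : K) (n k : ℕ) : K :=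
  if k ≤ n then qFact x n / (qFact x k * qFact x (n - k)) else 0

/-- `p_n^{(r)}`: the sum of the monomial symmetric polynomials `m_λ` over the
partitions `λ` of `n` of length `r` (in `N` variables, over `ℚ(q)`).
For `r = 0` this automatically gives `δ_{n,0}`. -/
def pnr (N n r : ℕ) : MvPolynomial (Fin N) K :=
  ∑ μ ∈ Finset.univ.filter (fun μ : Nat.Partition n => μ.parts.card = r),
    msymm (Fin N) K μ

/-- `E(t) = ∑_{m ≥ 0} e_m t^m`. -/
def Eser (N : ℕ) : PowerSeries (MvPolynomial (Fin N) K) :=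
  PowerSeries.mk fun m => esymm (Fin N) K m

/-- The property of being "the" `q`-derivative operator on power series over
`MvPolynomial (Fin N) ℚ(q)`: `Dq` satisfies `((q−1)·t) · Dq F = F(qt) − F(t)`
for every `F`.  (This characterizes `Dq F = (F(qt) − F(t))/((q−1)t)` uniquely,
since `(q−1)·t` is a nonzerodivisor.) -/
def IsqDeriv (N : ℕ)
    (Dq : PowerSeries (MvPolynomial (Fin N) K) → PowerSeries (MvPolynomial (Fin N) K)) : Prop :=
  ∀ F, (PowerSeries.C (MvPolynomial.C (qq - 1)) * PowerSeries.X) * Dq F =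
    PowerSeries.rescale (MvPolynomial.C qq) F - F

/-- The property that the family `P n r` is the family of `q`-analogs
`[p_n^{(r)}]_q`, i.e. it satisfies the defining generating identity
`[r]_q! · E(t) · ∑_{n≥r} [p_n^{(r)}]_q (−1)^{n−r} t^{n−r} = D_q^r E(t)` for every `r ≥ 0`,
where `Dq` is the `q`-derivative. -/
def IsqAnalog (N : ℕ)
    (Dq : PowerSeries (MvPolynomial (Fin N) K) → PowerSeries (MvPolynomial (Fin N) K))
    (P : ℕ → ℕ → MvPolynomial (Fin N) K) : Prop :=
  ∀ r : ℕ,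
    PowerSeries.C (MvPolynomial.C (qFact qq r)) * Eser N *
        (PowerSeries.mk fun m => (-1 : MvPolynomial (Fin N) K) ^ m * P (m + r) r) =
      Dq^[r] (Eser N)

end

namespace Matrix

variable {R : Type*} [CommRing R]

def hessenberg (e c : ℕ → R) (k : ℕ) : Matrix (Fin (k + 1)) (Fin (k + 1)) R :=
  of fun i j =>
    if (j : ℕ) = 0 then c (i : ℕ)
    else if (j : ℕ) = (i : ℕ) + 1 then 1
    else if (j : ℕ) ≤ (i : ℕ) then e ((i : ℕ) - (j : ℕ) + 1) else 0

def lowerToeplitz (e : ℕ → R) (k : ℕ) : Matrix (Fin k) (Fin k) R :=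
  of fun i j => if j ≤ i then e ((i : ℕ) - j) else 0

theorem det_lowerToeplitz {e : ℕ → R} (he : e 0 = 1) (k : ℕ) :
    (lowerToeplitz e k).det = 1 := by
  have htri : (lowerToeplitz e k).IsLowerTriangular := fun i j hij => if_neg (not_le.mpr hij)
  rw [det_of_isLowerTriangular _ htri]
  simp [lowerToeplitz, he]

theorem cramer_mulVec {n : Type*} [Fintype n] [DecidableEq n] (A : Matrix n n R) (u : n → R) :
    A.cramer (A *ᵥ u) = A.det • u := by
  rw [cramer_eq_adjugate_mulVec, mulVec_mulVec, adjugate_mul, smul_mulVec, one_mulVec]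

theorem hessenberg_eq_submatrix {e : ℕ → R} (he : e 0 = 1) (c : ℕ → R) (k : ℕ) :
    hessenberg e c k =
      ((lowerToeplitz e (k + 1)).updateCol (Fin.last k) fun i : Fin (k + 1) => c i).submatrix
        id (finRotate (k + 1)).symm := by
  ext i j
  rcases eq_or_ne j 0 with rfl | hj
  · simp [hessenberg, (finRotate (k + 1)).symm_apply_eq.mpr (finRotate_last (n := k)).symm]
  · have hj0 : (j : ℕ) ≠ 0 := Fin.val_ne_zero_iff.mpr hj
    have hj' := coe_finRotate_symm_of_ne_zero hj
    have hlast : (finRotate (k + 1)).symm j ≠ Fin.last k :=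
      Fin.lt_last_iff_ne_last.mp (by rw [Fin.lt_def, hj', Fin.val_last]; omega)
    rw [submatrix_apply, updateCol_ne hlast]
    simp only [hessenberg, lowerToeplitz, of_apply, id, Fin.le_def, hj']
    split_ifs <;> first | omega | rfl | (congr 1; omega) | (rw [← he]; congr 1; omega)

theorem lowerToeplitz_mulVec (e u : ℕ → R) (k : ℕ) (m : Fin k) :
    (lowerToeplitz e k *ᵥ fun j : Fin k => u j) m = coeff (m : ℕ) (mk e * mk u) := by
  have hrange : (Finset.range k).filter (· ≤ (m : ℕ)) = Finset.range (m + 1) := by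
    ext j
    simp only [Finset.mem_filter, Finset.mem_range]
    omega
  rw [mul_comm, PowerSeries.coeff_mul, Finset.Nat.sum_antidiagonal_eq_sum_range_succ_mk]
  simp only [mulVec, dotProduct, lowerToeplitz, of_apply, ite_mul, zero_mul,
    PowerSeries.coeff_mk, Fin.le_def]
  rw [Fin.sum_univ_eq_sum_range (fun j => if j ≤ (m : ℕ) then e (m - j) * u j else 0),
    ← Finset.sum_filter, hrange]
  exact Finset.sum_congr rfl fun j _ => mul_comm _ _

theorem det_hessenberg_of_mk_mul_mk_eq {e u c : ℕ → R} (he : e 0 = 1)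
    (h : mk e * mk u = mk c) (k : ℕ) : (hessenberg e c k).det = (-1) ^ k * u k := by
  have hsolve : (lowerToeplitz e (k + 1) *ᵥ fun j : Fin (k + 1) => u j) =
      fun i : Fin (k + 1) => c i := by
    ext m
    rw [lowerToeplitz_mulVec, h, PowerSeries.coeff_mk]
  rw [hessenberg_eq_submatrix he, det_permute', Equiv.Perm.sign_symm, sign_finRotate,
    ← cramer_apply, ← hsolve, cramer_mulVec, det_lowerToeplitz he]
  simp

end Matrix

section qAnalogs

open Finset

theorem qq_eq_algebraMap : qq = algebraMap (Polynomial ℚ) K Polynomial.X :=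
  RatFunc.algebraMap_X.symm

theorem qq_pow_sub_one_ne_zero {m : ℕ} (hm : m ≠ 0) : qq ^ m - 1 ≠ 0 := by
  rw [qq_eq_algebraMap, ← map_pow, ← map_one (algebraMap (Polynomial ℚ) K), ← map_sub,
    ← Polynomial.C_1]
  exact (map_ne_zero_iff _ (RatFunc.algebraMap_injective ℚ)).mpr
    (Polynomial.X_pow_sub_C_ne_zero (Nat.pos_of_ne_zero hm) 1)

theorem sub_one_mul_qNat (x : K) (m : ℕ) : (x - 1) * qNat x m = x ^ m - 1 := by
  rw [qNat, mul_comm]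
  exact geom_sum_mul x m

theorem qNat_ne_zero {m : ℕ} (hm : m ≠ 0) : qNat qq m ≠ 0 :=
  right_ne_zero_of_mul (sub_one_mul_qNat qq m ▸ qq_pow_sub_one_ne_zero hm)

theorem qFact_ne_zero (m : ℕ) : qFact qq m ≠ 0 :=
  prod_ne_zero_iff.mpr fun i _ => qNat_ne_zero i.succ_ne_zero

theorem qFact_add (x : K) (m r : ℕ) :
    qFact x (m + r) = qFact x m * ∏ i ∈ range r, qNat x (m + 1 + i) := by
  rw [qFact, prod_range_add, qFact]
  simp only [add_right_comm m]

theorem qFact_mul_qBinom (r m : ℕ) :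
    qFact qq r * qBinom qq (r + m) r = ∏ i ∈ range r, qNat qq (m + 1 + i) := by
  rw [qBinom, if_pos (Nat.le_add_right r m), Nat.add_sub_cancel_left, add_comm r, qFact_add]
  have := qFact_ne_zero r
  have := qFact_ne_zero m
  field_simp

end qAnalogs

namespace IsqDeriv

open Finset

variable {N : ℕ}
  {Dq : PowerSeries (MvPolynomial (Fin N) K) → PowerSeries (MvPolynomial (Fin N) K)}

theorem coeff_apply (hD : IsqDeriv N Dq) (F : PowerSeries (MvPolynomial (Fin N) K)) (m : ℕ) :
    PowerSeries.coeff m (Dq F) =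
      MvPolynomial.C (qNat qq (m + 1)) * PowerSeries.coeff (m + 1) F := by
  have h := congrArg (PowerSeries.coeff (m + 1)) (hD F)
  rw [mul_assoc, PowerSeries.coeff_C_mul, PowerSeries.coeff_succ_X_mul,
    map_sub (PowerSeries.coeff (m + 1)), PowerSeries.coeff_rescale] at h
  have hq : qq - 1 ≠ 0 := pow_one qq ▸ qq_pow_sub_one_ne_zero one_ne_zero
  refine mul_left_cancel₀ (MvPolynomial.C_ne_zero.mpr hq) ?_
  rw [h, ← mul_assoc, ← map_mul, sub_one_mul_qNat, map_sub, map_pow, map_one, sub_one_mul]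

theorem coeff_iterate (hD : IsqDeriv N Dq) (r : ℕ) (F : PowerSeries (MvPolynomial (Fin N) K))
    (m : ℕ) :
    PowerSeries.coeff m (Dq^[r] F) =
      MvPolynomial.C (∏ i ∈ range r, qNat qq (m + 1 + i)) * PowerSeries.coeff (m + r) F := by
  induction r generalizing F with
  | zero => simp
  | succ r ih =>
    rw [Function.iterate_succ_apply, ih, hD.coeff_apply, prod_range_succ, map_mul, mul_assoc,
      add_right_comm m 1 r, ← add_assoc]

theorem iterate_eq (hD : IsqDeriv N Dq) (r : ℕ) (F : PowerSeries (MvPolynomial (Fin N) K)) :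
    Dq^[r] F = PowerSeries.C (MvPolynomial.C (qFact qq r)) *
      mk fun m => MvPolynomial.C (qBinom qq (r + m) r) * PowerSeries.coeff (r + m) F := by
  refine PowerSeries.ext fun m => ?_
  rw [PowerSeries.coeff_C_mul, PowerSeries.coeff_mk, hD.coeff_iterate, ← mul_assoc, ← map_mul,
    qFact_mul_qBinom, add_comm r]

end IsqDeriv

open Finset in
theorem qAnalog_eq_det_general (N n r : ℕ) (hrn : r ≤ n)
    (Dq : PowerSeries (MvPolynomial (Fin N) K) → PowerSeries (MvPolynomial (Fin N) K))
    (hDq : IsqDeriv N Dq)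
    (P : ℕ → ℕ → MvPolynomial (Fin N) K) (hP : IsqAnalog N Dq P) :
    P n r =
      Matrix.det (Matrix.of fun i j : Fin (n - r + 1) =>
        if (j : ℕ) = 0 then
          MvPolynomial.C (qBinom qq (r + (i : ℕ)) r) * esymm (Fin N) K (r + (i : ℕ))
        else if (j : ℕ) = (i : ℕ) + 1 then 1
        else if (j : ℕ) ≤ (i : ℕ) then esymm (Fin N) K ((i : ℕ) - (j : ℕ) + 1)
        else 0) := by
  set c : ℕ → MvPolynomial (Fin N) K :=
    fun m => MvPolynomial.C (qBinom qq (r + m) r) * esymm (Fin N) K (r + m)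
  have hsolve : mk (esymm (Fin N) K) * mk (fun m => (-1) ^ m * P (m + r) r) = mk c := by
    refine mul_left_cancel₀ ((map_ne_zero_iff _ PowerSeries.C_injective).mpr
      (MvPolynomial.C_ne_zero.mpr (qFact_ne_zero r))) ?_
    rw [← mul_assoc, ← Eser, hP r, hDq.iterate_eq]
    simp only [Eser, PowerSeries.coeff_mk, c]
  have hdet := Matrix.det_hessenberg_of_mk_mul_mk_eq (esymm_zero (Fin N) K) hsolve (n - r)
  rw [Nat.sub_add_cancel hrn, ← mul_assoc, ← mul_pow, neg_one_mul, neg_neg, one_pow,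
    one_mul] at hdet
  exact hdet.symm

open Finset in
/-- for `n ≥ r ≥ 1`, `[p_n^{(r)}]_q` is the determinant of the
`(n−r+1) × (n−r+1)` lower-Hessenberg matrix `M` with (here `1`-based indices
`(i,j)` correspond to `0`-based indices `(i-1, j-1)`):
`M_{i,1} = [r+i−1 choose r]_q e_{r+i−1}`, `M_{i,i+1} = 1`,
`M_{i,j} = e_{i−j+1}` for `2 ≤ j ≤ i`, and `M_{i,j} = 0` for `j > i+1`. -/
theorem qAnalog_eq_det (N n r : ℕ) (hN : n ≤ N) (hr : 1 ≤ r) (hrn : r ≤ n)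
    (Dq : PowerSeries (MvPolynomial (Fin N) K) → PowerSeries (MvPolynomial (Fin N) K))
    (hDq : IsqDeriv N Dq)
    (P : ℕ → ℕ → MvPolynomial (Fin N) K) (hP : IsqAnalog N Dq P) :
    P n r =
      Matrix.det (Matrix.of fun i j : Fin (n - r + 1) =>
        if (j : ℕ) = 0 then
          MvPolynomial.C (qBinom qq (r + (i : ℕ)) r) * esymm (Fin N) K (r + (i : ℕ))
        else if (j : ℕ) = (i : ℕ) + 1 then 1
        else if (j : ℕ) ≤ (i : ℕ) then esymm (Fin N) K ((i : ℕ) - (j : ℕ) + 1)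
        else 0) :=
  qAnalog_eq_det_general N n r hrn Dq hDq P hP
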